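/- Let G be a group with a choice of generators w ↦ w̄ from W whose gross cogrowth satisfies θ < 1 (i.e., G is non-amenable). Then for every ε > 0, the set of words w such that every contiguous subword v of the concatenation ww with |w| ≥ |v| ≥ ε·|w| satisfies |v̄| ≥ ((1−θ)/θ − ε)·|v| is exponentially generic. -/

import Mathlib

open Filter

namespace GenericSubgroups

/-- A word over the alphabet `Fin m × Bool` (generator index, with `true` = formal inverse). -/
abbrev Word (m : ℕ) := List (Fin m × Bool)

/-- The disk of radius `n` : words of length at most `n`. -/
def ball (m n : ℕ) : Set (Word m) := {w | w.length ≤ n}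

/-- The sphere of radius `n` : words of length exactly `n`. -/
def sphere (m n : ℕ) : Set (Word m) := {w | w.length = n}

/-- A set of words is exponentially negligible. -/
def ExpNegligible {m : ℕ} (X : Set (Word m)) : Prop :=
  ∃ α : ℝ, 0 < α ∧ α < 1 ∧
    ∀ᶠ n in atTop, ((X ∩ ball m n).ncard : ℝ) / ((ball m n).ncard : ℝ) ≤ α ^ n

/-- A set of words is exponentially generic if its complement is exponentially negligible. -/
def ExpGeneric {m : ℕ} (X : Set (Word m)) : Prop := ExpNegligible Xᶜ

/-- Disk of radius `n` in the set of `k`-tuples of words. -/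
def ballK (m k n : ℕ) : Set (Fin k → Word m) := {w | ∀ i, (w i).length ≤ n}

def ExpNegligibleK {m k : ℕ} (X : Set (Fin k → Word m)) : Prop :=
  ∃ α : ℝ, 0 < α ∧ α < 1 ∧
    ∀ᶠ n in atTop, ((X ∩ ballK m k n).ncard : ℝ) / ((ballK m k n).ncard : ℝ) ≤ α ^ n

def ExpGenericK {m k : ℕ} (X : Set (Fin k → Word m)) : Prop := ExpNegligibleK Xᶜ

variable {G : Type*} [Group G]

/-- Evaluation of a word in `G`, determined by the family `g` of generators. -/
def eval {m : ℕ} (g : Fin m → G) (w : Word m) : G :=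
  (w.map (fun p => if p.2 then (g p.1)⁻¹ else g p.1)).prod

/-- Word length of an element of `G`. -/
noncomputable def wlen {m : ℕ} (g : Fin m → G) (x : G) : ℕ :=
  sInf {n | ∃ w : Word m, w.length = n ∧ eval g w = x}

/-- Word metric on `G`. -/
noncomputable def wdist {m : ℕ} (g : Fin m → G) (x y : G) : ℕ := wlen g (x⁻¹ * y)

/-- Words of length exactly `n` representing the identity. -/
def V {m : ℕ} (g : Fin m → G) (n : ℕ) : Set (Word m) :=
  {w | w.length = n ∧ eval g w = 1}

/-- The gross cogrowth `θ = limsup (1/n) log_{2m} |V_n|`. -/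
noncomputable def cogrowth {m : ℕ} (g : Fin m → G) : ℝ :=
  limsup (fun n : ℕ => Real.logb (2 * m : ℝ) ((V g n).ncard : ℝ) / (n : ℝ)) atTop

/-- The four-point (quadrilateral) condition with constant `δ` for the word metric. -/
def FourPoint {m : ℕ} (g : Fin m → G) (δ : ℝ) : Prop :=
  ∀ p q r s : G,
    (wdist g p s : ℝ) + (wdist g q r : ℝ) ≤
      2 * δ + max ((wdist g p q : ℝ) + (wdist g r s : ℝ)) ((wdist g p r : ℝ) + (wdist g q s : ℝ))

/-- The Gromov product `(x|y)_1` with respect to the word metric. -/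
noncomputable def gp {m : ℕ} (g : Fin m → G) (x y : G) : ℝ :=
  ((wlen g x : ℝ) + (wlen g y : ℝ) - (wlen g (x⁻¹ * y) : ℝ)) / 2

/-- `x^e` where `e : Bool`, `true` meaning inverse. -/
def powB (x : G) (e : Bool) : G := if e then x⁻¹ else x

/-- Formal inverse of a word. -/
def winv {m : ℕ} (w : Word m) : Word m := (w.reverse).map (fun p => (p.1, !p.2))

/-! A word `v` of length `k` with `|v̄| = l` is the first half of the relator `v z⁻¹` of length
`k + l`, `z` a geodesic for `v̄`. Hence for `θ' > θ` there are `O(k · (2m)^(θ'(1+c)k))` words of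
length `k` with `|v̄| < c k`, and `θ (1 + c) = 1 - θ ε < 1` for `c = (1-θ)/θ - ε`. A word `w` of
length `L` with such a factor `v` of `ww`, `|v| ≥ ε L`, is a rotation of `v r` with `|r| = L - |v|`;
so these words make up at most a fraction `poly(L) · (2m)^((θ'(1+c) - 1) ε L)` of the sphere,
which is exponentially small. -/

open Asymptotics Topology

lemma ncard_sphere (m L : ℕ) : (sphere m L).ncard = (2 * m) ^ L := by
  rw [← Nat.card_coe_set_eq]
  change Nat.card (List.Vector (Fin m × Bool) L) = _
  simp [mul_comm]

lemma finite_sphere (m L : ℕ) : (sphere m L).Finite := List.finite_length_eq _ L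

lemma pow_le_ncard_ball (m n : ℕ) : (2 * m) ^ n ≤ (ball m n).ncard :=
  ncard_sphere m n ▸ Set.ncard_le_ncard (fun _ hw => le_of_eq hw) (List.finite_length_le _ n)

lemma ball_eq_biUnion_sphere (m n : ℕ) : ball m n = ⋃ L ∈ Finset.range (n + 1), sphere m L := by
  ext w
  simp [ball, sphere]

lemma ncard_inter_ball_le_sum {m : ℕ} (X : Set (Word m)) (n : ℕ) :
    (X ∩ ball m n).ncard ≤ ∑ L ∈ Finset.range (n + 1), (X ∩ sphere m L).ncard := by
  rw [ball_eq_biUnion_sphere, Set.inter_iUnion₂]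
  exact Finset.set_ncard_biUnion_le _ _

lemma ExpNegligible.mono {m : ℕ} {X Y : Set (Word m)} (hXY : X ⊆ Y) (hY : ExpNegligible Y) :
    ExpNegligible X := by
  obtain ⟨α, hα0, hα1, hY⟩ := hY
  refine ⟨α, hα0, hα1, hY.mono fun n hn => le_trans ?_ hn⟩
  have hcard : (X ∩ ball m n).ncard ≤ (Y ∩ ball m n).ncard :=
    Set.ncard_le_ncard (Set.inter_subset_inter_left _ hXY)
      ((List.finite_length_le _ n).subset Set.inter_subset_right)
  gcongr

lemma tendsto_add_one_pow_mul_pow_atTop_nhds_zero (k : ℕ) {r : ℝ} (hr0 : 0 < r) (hr1 : r < 1) :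
    Tendsto (fun n : ℕ => ((n : ℝ) + 1) ^ k * r ^ n) atTop (𝓝 0) := by
  have h := ((tendsto_add_atTop_iff_nat 1).2
    (tendsto_pow_const_mul_const_pow_of_abs_lt_one k (abs_lt.2 ⟨by linarith, hr1⟩))).div_const r
  rw [zero_div] at h
  refine h.congr fun n => ?_
  field_simp
  push_cast
  ring

lemma ncard_inter_ball_le_of_ncard_inter_sphere_le {m : ℕ} {X : Set (Word m)} {C ν ρ : ℝ}
    (d : ℕ) (hν0 : 0 ≤ ν) (hνρ : ν ≤ ρ) (hρ : 1 ≤ ρ)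
    (hX : ∀ L, ((X ∩ sphere m L).ncard : ℝ) ≤ C * ((L : ℝ) + 1) ^ d * ν ^ L) (n : ℕ) :
    ((X ∩ ball m n).ncard : ℝ) ≤ C * ((n : ℝ) + 1) ^ (d + 1) * ρ ^ n := by
  have hC : 0 ≤ C := by simpa using (Nat.cast_nonneg _).trans (hX 0)
  calc ((X ∩ ball m n).ncard : ℝ)
      ≤ ∑ L ∈ Finset.range (n + 1), ((X ∩ sphere m L).ncard : ℝ) := by
        exact_mod_cast ncard_inter_ball_le_sum X n
    _ ≤ ∑ L ∈ Finset.range (n + 1), C * ((L : ℝ) + 1) ^ d * ν ^ L :=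
        Finset.sum_le_sum fun L _ => hX L
    _ ≤ ∑ L ∈ Finset.range (n + 1), C * ((n : ℝ) + 1) ^ d * ρ ^ n := by
        refine Finset.sum_le_sum fun L hL => ?_
        have hLn : L ≤ n := Nat.lt_succ_iff.1 (Finset.mem_range.1 hL)
        have hνρ : ν ^ L ≤ ρ ^ n :=
          (pow_le_pow_left₀ hν0 hνρ L).trans (pow_le_pow_right₀ hρ hLn)
        gcongr
    _ = C * ((n : ℝ) + 1) ^ (d + 1) * ρ ^ n := by
        rw [Finset.sum_const, Finset.card_range, nsmul_eq_mul]
        push_cast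
        ring

lemma expNegligible_of_ncard_inter_sphere_le {m : ℕ} {X : Set (Word m)} {C ν : ℝ} (d : ℕ)
    (hν0 : 0 ≤ ν) (hν : ν < 2 * m)
    (hX : ∀ L, ((X ∩ sphere m L).ncard : ℝ) ≤ C * ((L : ℝ) + 1) ^ d * ν ^ L) :
    ExpNegligible X := by
  have hm : 0 < m := by
    have : (0 : ℝ) < m := by linarith
    exact_mod_cast this
  have hb : (1 : ℝ) < 2 * m := by
    have : (1 : ℝ) ≤ m := by exact_mod_cast hm
    linarith
  set ρ := max ν 1
  have hρb : ρ / (2 * m) < 1 := (div_lt_one (by linarith)).2 (max_lt hν hb)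
  obtain ⟨α, hα, hα1⟩ := exists_between hρb
  have hα0 : 0 < α := lt_of_le_of_lt (by positivity) hα
  have hlim := (tendsto_add_one_pow_mul_pow_atTop_nhds_zero (d + 1) (by positivity)
    ((div_lt_one hα0).2 hα)).const_mul C
  rw [mul_zero] at hlim
  refine ⟨α, hα0, hα1, (hlim.eventually (gt_mem_nhds one_pos)).mono fun n hn => ?_⟩
  have hball := ncard_inter_ball_le_of_ncard_inter_sphere_le d hν0 (le_max_left _ _)
    (le_max_right _ _) hX n
  calc ((X ∩ ball m n).ncard : ℝ) / (ball m n).ncard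
      ≤ C * ((n : ℝ) + 1) ^ (d + 1) * ρ ^ n / (2 * m) ^ n :=
        div_le_div₀ ((Nat.cast_nonneg _).trans hball) hball (by positivity)
          (by exact_mod_cast pow_le_ncard_ball m n)
    _ = C * (((n : ℝ) + 1) ^ (d + 1) * (ρ / (2 * m) / α) ^ n) * α ^ n := by
        rw [div_pow, div_pow]
        field_simp
    _ ≤ α ^ n := mul_le_of_le_one_left (by positivity) hn.le

lemma exists_prefix_rotate_of_append_self_eq {α : Type*} {w u v u' : List α}
    (h : w ++ w = u ++ v ++ u') (hv : v.length ≤ w.length) :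
    ∃ j ≤ w.length, v <+: w.rotate j := by
  have hlen := congrArg List.length h
  simp only [List.length_append] at hlen
  have hdrop : v <+: (w ++ w).drop u.length := by
    rw [h, List.append_assoc, List.drop_left]
    exact List.prefix_append v u'
  rcases le_total u.length w.length with hu | hu
  · have hrot : w.rotate u.length <+: (w ++ w).drop u.length := by
      rw [List.rotate_eq_drop_append_take hu, List.drop_append_of_le_length hu]
      exact (List.prefix_append_right_inj _).2 (List.take_prefix _ _)
    exact ⟨u.length, hu, List.prefix_of_prefix_length_le hdrop hrot (by simpa using hv)⟩
  · refine ⟨u.length - w.length, by omega, ?_⟩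
    refine hdrop.trans ?_
    rw [List.drop_append, List.drop_eq_nil_of_le hu, List.nil_append,
      List.rotate_eq_drop_append_take (by omega)]
    exact List.prefix_append _ _

section Words

variable {m : ℕ} (g : Fin m → G)

lemma eval_append (v w : Word m) : eval g (v ++ w) = eval g v * eval g w := by
  simp [eval]

lemma eval_winv (w : Word m) : eval g (winv w) = (eval g w)⁻¹ := by
  induction w with
  | nil => simp [eval, winv]
  | cons p w ih =>
    have h : winv (p :: w) = winv w ++ [(p.1, !p.2)] := by simp [winv]
    rw [h, eval_append, ih]
    obtain ⟨a, e⟩ := p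
    cases e <;> simp [eval]

lemma length_winv (w : Word m) : (winv w).length = w.length := by
  simp [winv]

lemma exists_length_eq_wlen_eval (v : Word m) :
    ∃ z : Word m, z.length = wlen g (eval g v) ∧ eval g z = eval g v :=
  Nat.sInf_mem (s := {n | ∃ w : Word m, w.length = n ∧ eval g w = eval g v}) ⟨_, v, rfl, rfl⟩

lemma finite_V (n : ℕ) : (V g n).Finite :=
  (finite_sphere m n).subset fun _ hw => hw.1

/-- A word `v` is recovered as the first half of the relator `v z⁻¹` of length `|v| + |v̄|`,
where `z` is a geodesic for `v̄`. -/
lemma ncard_length_eq_wlen_eq_le (k l : ℕ) :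
    {v : Word m | v.length = k ∧ wlen g (eval g v) = l}.ncard ≤ (V g (k + l)).ncard := by
  have hsub : {v : Word m | v.length = k ∧ wlen g (eval g v) = l} ⊆
      List.take k '' V g (k + l) := by
    rintro v ⟨hv, hl⟩
    obtain ⟨z, hz, hzv⟩ := exists_length_eq_wlen_eval g v
    refine ⟨v ++ winv z, ⟨?_, ?_⟩, List.take_left' hv⟩
    · simp [length_winv, hz, hv, hl]
    · rw [eval_append, eval_winv, hzv, mul_inv_cancel]
  exact (Set.ncard_le_ncard hsub ((finite_V g _).image _)).trans
    (Set.ncard_image_le (finite_V g _))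

def shortWords (c : ℝ) (k : ℕ) : Set (Word m) :=
  {v | v.length = k ∧ (wlen g (eval g v) : ℝ) < c * k}

lemma ncard_shortWords_le (c : ℝ) (k : ℕ) :
    (shortWords g c k).ncard ≤ ∑ l ∈ Finset.range ⌈c * k⌉₊, (V g (k + l)).ncard := by
  have hsub : shortWords g c k ⊆
      ⋃ l ∈ Finset.range ⌈c * k⌉₊, {v : Word m | v.length = k ∧ wlen g (eval g v) = l} := by
    rintro v ⟨hv, hlt⟩
    exact Set.mem_iUnion₂.2 ⟨_, Finset.mem_range.2 (Nat.lt_ceil.2 hlt), hv, rfl⟩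
  have hfin : (⋃ l ∈ Finset.range ⌈c * k⌉₊,
      {v : Word m | v.length = k ∧ wlen g (eval g v) = l}).Finite :=
    (finite_sphere m k).subset (by simp +contextual [Set.subset_def, sphere])
  exact (Set.ncard_le_ncard hsub hfin).trans <| (Finset.set_ncard_biUnion_le _ _).trans <|
    Finset.sum_le_sum fun l _ => ncard_length_eq_wlen_eq_le g k l

lemma ncard_shortWords_le_mul_pow {C γ c : ℝ} (hγ : 1 ≤ γ) (hc : 0 ≤ c)
    (hV : ∀ n, ((V g n).ncard : ℝ) ≤ C * γ ^ n) (k : ℕ) :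
    ((shortWords g c k).ncard : ℝ) ≤ C * (c * k + 1) * (γ ^ (1 + c)) ^ k := by
  have hC : 0 ≤ C := by simpa using (Nat.cast_nonneg _).trans (hV 0)
  have hterm : ∀ l ∈ Finset.range ⌈c * k⌉₊, ((V g (k + l)).ncard : ℝ) ≤ C * (γ ^ (1 + c)) ^ k := by
    intro l hl
    have hl : (l : ℝ) ≤ c * k := (Nat.lt_ceil.1 (Finset.mem_range.1 hl)).le
    refine (hV _).trans ?_
    gcongr
    rw [← Real.rpow_natCast, ← Real.rpow_natCast, ← Real.rpow_mul (by linarith)]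
    exact Real.rpow_le_rpow_of_exponent_le hγ (by push_cast; linarith)
  calc ((shortWords g c k).ncard : ℝ)
      ≤ ∑ l ∈ Finset.range ⌈c * k⌉₊, ((V g (k + l)).ncard : ℝ) := by
        exact_mod_cast ncard_shortWords_le g c k
    _ ≤ ∑ l ∈ Finset.range ⌈c * k⌉₊, C * (γ ^ (1 + c)) ^ k := Finset.sum_le_sum hterm
    _ = ⌈c * k⌉₊ * (C * (γ ^ (1 + c)) ^ k) := by simp
    _ ≤ (c * k + 1) * (C * (γ ^ (1 + c)) ^ k) := by
        gcongr
        exact (Nat.ceil_lt_add_one (by positivity)).le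
    _ = C * (c * k + 1) * (γ ^ (1 + c)) ^ k := by ring

end Words

section CyclicFactors

variable {m : ℕ} (g : Fin m → G)

def withShortCyclicFactor (c ε : ℝ) : Set (Word m) :=
  {w | ∃ u v u' : Word m, w ++ w = u ++ v ++ u' ∧ v.length ≤ w.length ∧
    ε * w.length ≤ v.length ∧ (wlen g (eval g v) : ℝ) < c * v.length}

lemma withShortCyclicFactor_inter_sphere_subset (c ε : ℝ) (L : ℕ) :
    withShortCyclicFactor g c ε ∩ sphere m L ⊆
      ⋃ j ∈ Finset.range (L + 1), ⋃ k ∈ Finset.Icc ⌈ε * L⌉₊ L,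
        (fun p : Word m × Word m => (p.1 ++ p.2).rotate j) ''
          (shortWords g c k ×ˢ sphere m (L - k)) := by
  rintro w ⟨⟨u, v, u', h, hvw, hε, hshort⟩, hw : w.length = L⟩
  obtain ⟨j, hj, r, hr⟩ := exists_prefix_rotate_of_append_self_eq h hvw
  have hlen : v.length + r.length = L := by simpa [hw] using congrArg List.length hr
  refine Set.mem_iUnion₂.2 ⟨L - j, Finset.mem_range.2 (by omega), Set.mem_iUnion₂.2
    ⟨v.length, Finset.mem_Icc.2 ⟨Nat.ceil_le.2 (hw ▸ hε), by omega⟩, (v, r),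
      ⟨⟨rfl, hshort⟩, show r.length = L - v.length by omega⟩, ?_⟩⟩
  change (v ++ r).rotate (L - j) = w
  rw [hr, List.rotate_rotate, Nat.add_sub_cancel' (hw ▸ hj), ← hw, List.rotate_length]

lemma ncard_withShortCyclicFactor_inter_sphere_le (c ε : ℝ) (L : ℕ) :
    (withShortCyclicFactor g c ε ∩ sphere m L).ncard ≤
      (L + 1) * ∑ k ∈ Finset.Icc ⌈ε * L⌉₊ L, (shortWords g c k).ncard * (2 * m) ^ (L - k) := by
  have hfin : ∀ k, (shortWords g c k ×ˢ sphere m (L - k)).Finite := fun k =>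
    ((finite_sphere m k).subset fun _ hv => hv.1).prod (finite_sphere m _)
  refine (Set.ncard_le_ncard (withShortCyclicFactor_inter_sphere_subset g c ε L)
    (Set.Finite.biUnion (Finset.finite_toSet _) fun _ _ =>
      Set.Finite.biUnion (Finset.finite_toSet _) fun k _ => (hfin k).image _)).trans ?_
  refine (Finset.set_ncard_biUnion_le _ _).trans ?_
  calc _ ≤ ∑ _j ∈ Finset.range (L + 1), ∑ k ∈ Finset.Icc ⌈ε * L⌉₊ L,
        (shortWords g c k).ncard * (2 * m) ^ (L - k) :=
        Finset.sum_le_sum fun _ _ => (Finset.set_ncard_biUnion_le _ _).trans <|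
          Finset.sum_le_sum fun k _ => (Set.ncard_image_le (hfin k)).trans_eq
            (by rw [Set.ncard_prod, ncard_sphere])
    _ = _ := by simp

lemma ncard_shortWords_mul_pow_le {C γ c ε : ℝ} (hγ : 1 ≤ γ) (hc : 0 ≤ c)
    (hγc : γ ^ (1 + c) ≤ 2 * m) (hV : ∀ n, ((V g n).ncard : ℝ) ≤ C * γ ^ n) {k L : ℕ}
    (hk : k ∈ Finset.Icc ⌈ε * L⌉₊ L) :
    ((shortWords g c k).ncard : ℝ) * (2 * m) ^ (L - k) ≤
      C * (c * L + 1) * (2 * m * (γ ^ (1 + c) / (2 * m)) ^ ε) ^ L := by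
  set μ := γ ^ (1 + c)
  set b : ℝ := 2 * m
  obtain ⟨hεk, hkL⟩ := Finset.mem_Icc.1 hk
  have hC : 0 ≤ C := by simpa using (Nat.cast_nonneg _).trans (hV 0)
  have hμ : 1 ≤ μ := Real.one_le_rpow hγ (by linarith)
  have hb : 0 < b := by linarith
  have hdecay : (μ / b) ^ k ≤ ((μ / b) ^ ε) ^ L := by
    rw [← Real.rpow_natCast, ← Real.rpow_natCast, ← Real.rpow_mul (by positivity)]
    exact Real.rpow_le_rpow_of_exponent_ge (by positivity) ((div_le_one hb).2 hγc)
      (Nat.ceil_le.1 hεk)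
  have hbL : b ^ L = b ^ (L - k) * b ^ k := by rw [← pow_add, Nat.sub_add_cancel hkL]
  calc ((shortWords g c k).ncard : ℝ) * b ^ (L - k)
      ≤ C * (c * k + 1) * μ ^ k * b ^ (L - k) := by
        gcongr
        exact ncard_shortWords_le_mul_pow g hγ hc hV k
    _ = C * (c * k + 1) * b ^ L * (μ / b) ^ k := by
        rw [hbL, div_pow]
        field_simp
    _ ≤ C * (c * L + 1) * b ^ L * ((μ / b) ^ ε) ^ L := by
        gcongr
    _ = C * (c * L + 1) * (b * (μ / b) ^ ε) ^ L := by ring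

lemma ncard_withShortCyclicFactor_inter_sphere_le_mul_pow {C γ c ε : ℝ} (hγ : 1 ≤ γ)
    (hc : 0 ≤ c) (hγc : γ ^ (1 + c) ≤ 2 * m) (hV : ∀ n, ((V g n).ncard : ℝ) ≤ C * γ ^ n)
    (L : ℕ) :
    ((withShortCyclicFactor g c ε ∩ sphere m L).ncard : ℝ) ≤
      C * (c + 1) * ((L : ℝ) + 1) ^ 3 * (2 * m * (γ ^ (1 + c) / (2 * m)) ^ ε) ^ L := by
  set ν := 2 * m * (γ ^ (1 + c) / (2 * m)) ^ ε
  have hC : 0 ≤ C := by simpa using (Nat.cast_nonneg _).trans (hV 0)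
  have hν : 0 ≤ ν := by
    have : 0 < γ ^ (1 + c) := by positivity
    positivity
  have hcard : ((Finset.Icc ⌈ε * L⌉₊ L).card : ℝ) ≤ L + 1 := by
    exact_mod_cast (Nat.card_Icc _ _).trans_le (Nat.sub_le _ _)
  calc ((withShortCyclicFactor g c ε ∩ sphere m L).ncard : ℝ)
      ≤ (L + 1) * ∑ k ∈ Finset.Icc ⌈ε * L⌉₊ L,
          ((shortWords g c k).ncard : ℝ) * (2 * m) ^ (L - k) := by
        exact_mod_cast ncard_withShortCyclicFactor_inter_sphere_le g c ε L
    _ ≤ (L + 1) * ∑ _k ∈ Finset.Icc ⌈ε * L⌉₊ L, C * (c * L + 1) * ν ^ L :=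
        mul_le_mul_of_nonneg_left (Finset.sum_le_sum fun k hk =>
          ncard_shortWords_mul_pow_le g hγ hc hγc hV hk) (by positivity)
    _ ≤ (L + 1) * ((L + 1) * (C * (c * L + 1) * ν ^ L)) := by
        rw [Finset.sum_const, nsmul_eq_mul]
        gcongr
    _ ≤ C * (c + 1) * ((L : ℝ) + 1) ^ 3 * ν ^ L := by
        have hcL : c * L + 1 ≤ (c + 1) * (L + 1) := by nlinarith
        calc ((L : ℝ) + 1) * ((L + 1) * (C * (c * L + 1) * ν ^ L))
            = C * ((L + 1) ^ 2 * (c * L + 1)) * ν ^ L := by ring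
          _ ≤ C * ((L + 1) ^ 2 * ((c + 1) * (L + 1))) * ν ^ L := by gcongr
          _ = C * (c + 1) * ((L : ℝ) + 1) ^ 3 * ν ^ L := by ring

theorem expNegligible_withShortCyclicFactor {γ c ε : ℝ} (hγ : 1 ≤ γ) (hc : 0 ≤ c) (hε : 0 < ε)
    (hγc : γ ^ (1 + c) < 2 * m) (hV : ∀ᶠ n in atTop, ((V g n).ncard : ℝ) ≤ γ ^ n) :
    ExpNegligible (withShortCyclicFactor g c ε) := by
  have hγn : ∀ n : ℕ, 0 < γ ^ n := fun n => by positivity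
  have hO : (fun n => ((V g n).ncard : ℝ)) =O[atTop] fun n => γ ^ n :=
    IsBigO.of_bound' (hV.mono fun n hn => by simpa [abs_of_nonneg (zero_le_one.trans hγ)] using hn)
  obtain ⟨C, hC⟩ := isBigO_top.1 (hO.nat_of_atTop (.of_forall fun n h => absurd h (hγn n).ne'))
  have hV' : ∀ n, ((V g n).ncard : ℝ) ≤ C * γ ^ n := fun n => by
    simpa [abs_of_nonneg (zero_le_one.trans hγ)] using hC n
  have hb : 0 < (2 * m : ℝ) := (Real.rpow_pos_of_pos (by linarith) _).trans hγc
  refine expNegligible_of_ncard_inter_sphere_le 3 (by positivity) ?_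
    (ncard_withShortCyclicFactor_inter_sphere_le_mul_pow g hγ hc hγc.le hV')
  calc 2 * m * (γ ^ (1 + c) / (2 * m)) ^ ε < 2 * m * 1 := by
        gcongr
        exact Real.rpow_lt_one (by positivity) ((div_lt_one hb).2 hγc) hε
    _ = 2 * m := mul_one _

lemma eventually_ncard_V_le_of_cogrowth_lt (hm : 0 < m) {θ : ℝ} (h : cogrowth g < θ) :
    ∀ᶠ n in atTop, ((V g n).ncard : ℝ) ≤ ((2 * m : ℝ) ^ θ) ^ n := by
  have hb : (1 : ℝ) < 2 * m := by
    have : (1 : ℝ) ≤ m := by exact_mod_cast hm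
    linarith
  have hbdd : IsBoundedUnder (· ≤ ·) atTop
      (fun n : ℕ => Real.logb (2 * m) ((V g n).ncard) / n) := by
    refine isBoundedUnder_of ⟨1, fun n => div_le_one_of_le₀ ?_ n.cast_nonneg⟩
    rcases eq_or_ne ((V g n).ncard) 0 with h0 | h0
    · simp [h0]
    · rw [Real.logb_le_iff_le_rpow hb (by positivity), Real.rpow_natCast]
      have hV : (V g n).ncard ≤ (2 * m) ^ n :=
        ncard_sphere m n ▸ Set.ncard_le_ncard (fun _ hw => hw.1) (finite_sphere m n)
      exact_mod_cast hV
  filter_upwards [eventually_lt_of_limsup_lt h hbdd, eventually_gt_atTop 0] with n hn hn0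
  rw [← Real.rpow_natCast, ← Real.rpow_mul (by positivity)]
  rcases eq_or_ne ((V g n).ncard) 0 with h0 | h0
  · rw [h0, Nat.cast_zero]
    positivity
  · rw [div_lt_iff₀ (by positivity)] at hn
    exact ((Real.logb_lt_iff_lt_rpow hb (by positivity)).1 hn).le

end CyclicFactors

/-- With `c = (1 - θ)/θ - ε` one has `θ (1 + c) = 1 - θ ε` whenever `c > 0`. -/
lemma max_mul_one_add_max_lt_one {θ ε : ℝ} (hθ : θ < 1) (hε : 0 < ε) :
    max θ 0 * (1 + max ((1 - θ) / θ - ε) 0) < 1 := by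
  rcases le_or_gt ((1 - θ) / θ - ε) 0 with hc | hc
  · rw [max_eq_right hc]
    simpa using max_lt hθ one_pos
  · have hθ0 : 0 < θ := by
      by_contra! h
      have : (1 - θ) / θ ≤ 0 := div_nonpos_of_nonneg_of_nonpos (by linarith) h
      linarith
    rw [max_eq_left hc.le, max_eq_left hθ0.le, mul_add, mul_sub, mul_div_cancel₀ _ hθ0.ne']
    nlinarith

theorem generic_subword_of_square_length_lower_bound_general (m : ℕ) (hm : 2 ≤ m) {G : Type*} [Group G]
    (g : Fin m → G) (hθ : cogrowth g < 1) (ε : ℝ) (hε : 0 < ε) :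
    ExpGeneric {w : Word m | ∀ u v u' : Word m, w ++ w = u ++ v ++ u' →
      v.length ≤ w.length → ε * (w.length : ℝ) ≤ (v.length : ℝ) →
      ((1 - cogrowth g) / cogrowth g - ε) * (v.length : ℝ) ≤ (wlen g (eval g v) : ℝ)} := by
  set θ := cogrowth g
  set c := (1 - θ) / θ - ε
  obtain ⟨θ', hθθ', hθ'c⟩ := exists_between
    ((lt_div_iff₀ (by positivity)).2 (max_mul_one_add_max_lt_one hθ hε))
  have hb : (1 : ℝ) < 2 * m := by
    have : (2 : ℝ) ≤ m := by exact_mod_cast hm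
    linarith
  have hγc : ((2 * m : ℝ) ^ θ') ^ (1 + max c 0) < 2 * m := by
    rw [← Real.rpow_mul (by linarith)]
    simpa using Real.rpow_lt_rpow_of_exponent_lt hb ((lt_div_iff₀ (by positivity)).1 hθ'c)
  -- Using `max c 0` for `c` only enlarges the bad set and covers the vacuous case `c ≤ 0`.
  refine ExpNegligible.mono ?_ (expNegligible_withShortCyclicFactor g
    (Real.one_le_rpow hb.le ((le_max_right θ 0).trans hθθ'.le)) (le_max_right c 0) hε hγc
    (eventually_ncard_V_le_of_cogrowth_lt g (by omega) ((le_max_left θ 0).trans_lt hθθ')))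
  intro w hw
  simp only [Set.mem_compl_iff, Set.mem_ofPred_eq, not_forall, not_le] at hw
  obtain ⟨u, v, u', h, hvw, hεv, hshort⟩ := hw
  exact ⟨u, v, u', h, hvw, hεv, hshort.trans_le (by gcongr; exact le_max_left c 0)⟩

/-- Lemma `quasi`(2): if `G` is non-amenable (`θ < 1`), then for every
`ε > 0` the set of words `w` such that every contiguous subword `v` of `ww` with
`|w| ≥ |v| ≥ ε|w|` satisfies `|v̄| ≥ ((1-θ)/θ - ε)|v|` is exponentially generic. -/
theorem generic_subword_of_square_length_lower_bound (m : ℕ) (hm : 2 ≤ m) {G : Type*} [Group G]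
    (g : Fin m → G) (hsurj : Function.Surjective (eval g))
    (hθ : cogrowth g < 1) (ε : ℝ) (hε : 0 < ε) :
    ExpGeneric {w : Word m | ∀ u v u' : Word m, w ++ w = u ++ v ++ u' →
      v.length ≤ w.length → ε * (w.length : ℝ) ≤ (v.length : ℝ) →
      ((1 - cogrowth g) / cogrowth g - ε) * (v.length : ℝ) ≤ (wlen g (eval g v) : ℝ)} :=
  generic_subword_of_square_length_lower_bound_general m hm g hθ ε hε

end GenericSubgroups
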